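/- Let p and q be primes with p ≡ 1 (mod 4) and q ≡ 3 (mod 4), let d = p·q, and let (x, y) be the fundamental solution of the Pell equation x² − d·y² = 1. If y is odd, then there exist integers a and b with |a² − d·b²| = 2, or there exist integers a and b with |p·a² − q·b²| = 2. -/

import Mathlib

/-!
As `d` and `y` are odd, `x` is even, so `x - 1` and `x + 1` are coprime with product `p q y²`.
Each of them is therefore a square times one of `1, p, q, p q`, and since they differ by `2`,
the four ways of distributing `p` and `q` give `t² - d s² = 2`, `s² - d t² = -2`, or
`p s² - q t² = ±2`.
-/

theorem IsCoprime.exists_of_mul_eq_prime_mul {R : Type*} [CommRing R] [IsDomain R]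
    {m n p k : R} (hmn : IsCoprime m n) (hp : Prime p) (h : m * n = p * k) :
    (∃ m', m = p * m' ∧ IsCoprime m' n ∧ m' * n = k) ∨
      ∃ n', n = p * n' ∧ IsCoprime m n' ∧ m * n' = k := by
  rcases hp.dvd_or_dvd ⟨k, h⟩ with ⟨m', rfl⟩ | ⟨n', rfl⟩
  · refine .inl ⟨m', rfl, hmn.of_mul_left_right, mul_left_cancel₀ hp.ne_zero ?_⟩
    rw [← h, mul_assoc]
  · refine .inr ⟨n', rfl, hmn.of_mul_right_right, mul_left_cancel₀ hp.ne_zero ?_⟩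
    rw [← h, mul_left_comm]

theorem Int.exists_sq_of_isCoprime_of_mul_eq_sq {m n c : ℤ} (hm : 0 < m) (hn : 0 < n)
    (hmn : IsCoprime m n) (h : m * n = c ^ 2) : ∃ s t : ℤ, m = s ^ 2 ∧ n = t ^ 2 := by
  have sq_of_pos {a b : ℤ} (ha : 0 < a) (hab : IsCoprime a b) (h : a * b = c ^ 2) : ∃ s, a = s ^ 2 := by
    obtain ⟨s, hs | hs⟩ := Int.sq_of_isCoprime hab h
    · exact ⟨s, hs⟩
    · nlinarith [sq_nonneg s]
  obtain ⟨s, hs⟩ := sq_of_pos hm hmn h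
  obtain ⟨t, ht⟩ := sq_of_pos hn hmn.symm (by rw [mul_comm, h])
  exact ⟨s, t, hs, ht⟩

theorem Int.exists_sq_of_isCoprime_of_mul_eq_prime_mul_prime_mul_sq {p q : ℕ} (hp : p.Prime)
    (hq : q.Prime) {m n c : ℤ} (hm : 0 < m) (hn : 0 < n) (hmn : IsCoprime m n)
    (h : m * n = p * q * c ^ 2) :
    ∃ s t : ℤ, (m = p * q * s ^ 2 ∧ n = t ^ 2) ∨ (m = p * s ^ 2 ∧ n = q * t ^ 2) ∨
      (m = q * s ^ 2 ∧ n = p * t ^ 2) ∨ (m = s ^ 2 ∧ n = p * q * t ^ 2) := by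
  have hp0 : (0 : ℤ) ≤ p := p.cast_nonneg
  have hq0 : (0 : ℤ) ≤ q := q.cast_nonneg
  have hpq : m * n = p * (q * c ^ 2) := by rw [h, mul_assoc]
  rcases hmn.exists_of_mul_eq_prime_mul (Nat.prime_iff_prime_int.mp hp) hpq with
    ⟨m, rfl, hmn, h⟩ | ⟨n, rfl, hmn, h⟩
  · have hm := pos_of_mul_pos_right hm hp0
    rcases hmn.exists_of_mul_eq_prime_mul (Nat.prime_iff_prime_int.mp hq) h with
      ⟨m, rfl, hmn, h⟩ | ⟨n, rfl, hmn, h⟩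
    · obtain ⟨s, t, rfl, rfl⟩ :=
        Int.exists_sq_of_isCoprime_of_mul_eq_sq (pos_of_mul_pos_right hm hq0) hn hmn h
      exact ⟨s, t, .inl ⟨by ring, rfl⟩⟩
    · obtain ⟨s, t, rfl, rfl⟩ :=
        Int.exists_sq_of_isCoprime_of_mul_eq_sq hm (pos_of_mul_pos_right hn hq0) hmn h
      exact ⟨s, t, .inr <| .inl ⟨rfl, rfl⟩⟩
  · have hn := pos_of_mul_pos_right hn hp0
    rcases hmn.exists_of_mul_eq_prime_mul (Nat.prime_iff_prime_int.mp hq) h with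
      ⟨m, rfl, hmn, h⟩ | ⟨n, rfl, hmn, h⟩
    · obtain ⟨s, t, rfl, rfl⟩ :=
        Int.exists_sq_of_isCoprime_of_mul_eq_sq (pos_of_mul_pos_right hm hq0) hn hmn h
      exact ⟨s, t, .inr <| .inr <| .inl ⟨rfl, rfl⟩⟩
    · obtain ⟨s, t, rfl, rfl⟩ :=
        Int.exists_sq_of_isCoprime_of_mul_eq_sq hm (pos_of_mul_pos_right hn hq0) hmn h
      exact ⟨s, t, .inr <| .inr <| .inr ⟨rfl, by ring⟩⟩

theorem Int.isCoprime_sub_one_add_one_of_even {x : ℤ} (hx : Even x) :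
    IsCoprime (x - 1) (x + 1) := by
  obtain ⟨k, rfl⟩ := hx
  exact ⟨k, 1 - k, by ring⟩

theorem exists_abs_eq_two_of_sq_sub_mul_sq_eq_one {p q : ℕ} (hp : p.Prime) (hq : q.Prime)
    (hpq : Odd ((p : ℤ) * q)) {x y : ℤ} (h : x ^ 2 - p * q * y ^ 2 = 1) (hy : Odd y) :
    (∃ s t : ℤ, |s ^ 2 - p * q * t ^ 2| = 2) ∨ ∃ s t : ℤ, |p * s ^ 2 - q * t ^ 2| = 2 := by
  wlog hx : 0 ≤ x generalizing x
  · exact this (x := -x) (by rwa [neg_sq]) (by linarith)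
  have hx_even : Even x := by
    have : Even (x ^ 2) := by
      rw [show x ^ 2 = p * q * y ^ 2 + 1 by linarith]
      exact (hpq.mul hy.pow).add_one
    exact (Int.even_pow' two_ne_zero).mp this
  have hx1 : 1 < x := by
    have : 0 < (p : ℤ) * q * y ^ 2 := by
      have := hp.pos; have := hq.pos
      have : y ≠ 0 := by rintro rfl; simp at hy
      positivity
    nlinarith
  obtain ⟨s, t, ⟨hm, hn⟩ | ⟨hm, hn⟩ | ⟨hm, hn⟩ | ⟨hm, hn⟩⟩ :=
    Int.exists_sq_of_isCoprime_of_mul_eq_prime_mul_prime_mul_sq (c := y) hp hq (by linarith)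
      (by linarith) (Int.isCoprime_sub_one_add_one_of_even hx_even)
      (by linear_combination h)
  · exact .inl ⟨t, s, by rw [show t ^ 2 - p * q * s ^ 2 = 2 by linarith]; norm_num⟩
  · exact .inr ⟨s, t, by rw [show p * s ^ 2 - q * t ^ 2 = -2 by linarith]; norm_num⟩
  · exact .inr ⟨t, s, by rw [show p * t ^ 2 - q * s ^ 2 = 2 by linarith]; norm_num⟩
  · exact .inl ⟨s, t, by rw [show s ^ 2 - p * q * t ^ 2 = -2 by linarith]; norm_num⟩

theorem stmt_4_general (p q : ℕ) (hp : p.Prime) (hq : q.Prime) (hp4 : p % 4 = 1) (hq4 : q % 4 = 3)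
    (d : ℤ) (hd : d = (p : ℤ) * q)
    (a : Pell.Solution₁ d) (hy : Odd a.y) :
    (∃ s t : ℤ, |s ^ 2 - d * t ^ 2| = 2) ∨ (∃ s t : ℤ, |(p : ℤ) * s ^ 2 - (q : ℤ) * t ^ 2| = 2) := by
  subst hd
  have hpq : Odd ((p : ℤ) * q) :=
    (Int.odd_coe_nat p).mpr (Nat.odd_iff.mpr (by omega)) |>.mul
      ((Int.odd_coe_nat q).mpr (Nat.odd_iff.mpr (by omega)))
  exact exists_abs_eq_two_of_sq_sub_mul_sq_eq_one hp hq hpq a.prop hy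

/-- Let `p, q` be primes with `p ≡ 1 (mod 4)`, `q ≡ 3 (mod 4)`, let `d = p·q`, and let
`(x, y)` be the fundamental solution of `x² − d·y² = 1`. If `y` is odd, then there are
integers `a, b` with `|a² − d·b²| = 2`, or there are integers `a, b` with
`|p·a² − q·b²| = 2`. -/
theorem stmt_4 (p q : ℕ) (hp : p.Prime) (hq : q.Prime) (hp4 : p % 4 = 1) (hq4 : q % 4 = 3)
    (d : ℤ) (hd : d = (p : ℤ) * q)
    (a : Pell.Solution₁ d) (ha : Pell.IsFundamental a) (hy : Odd a.y) :
    (∃ s t : ℤ, |s ^ 2 - d * t ^ 2| = 2) ∨ (∃ s t : ℤ, |(p : ℤ) * s ^ 2 - (q : ℤ) * t ^ 2| = 2) :=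
  stmt_4_general p q hp hq hp4 hq4 d hd a hy
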